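/- Let q ≥ 2, let 𝒯 be an SLP representing T, and suppose X_j is a right q-gram neighbor of X_i. If |val(X_{r(i)})| ≥ q, then j = lm_q(X_{r(i)}), i.e., X_j is the label of the deepest node on the leftmost path of the derivation subtree rooted at a node labeled X_{r(i)} whose derived string has length at least q; in particular, the right q-gram neighbor of X_i is uniquely determined, and moreover |val(X_{ℓ(j)})| < q. -/

import Mathlib

/-- A straight line program over alphabet `α`: variables are `Fin n` (variable
`X_i` of the paper corresponds to index `i-1`), each with either a terminal
rule (a single character) or a nonterminal rule `X_i → X_j X_k` with `j,k < i`. -/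
structure SLP (α : Type) where
  n : ℕ
  npos : 0 < n
  rule : Fin n → α ⊕ (Fin n × Fin n)
  wf : ∀ i jk, rule i = Sum.inr jk → jk.1 < i ∧ jk.2 < i

namespace SLP

variable {α : Type}

/-- the string `val(X_i)` derived by a variable -/
def val (S : SLP α) (i : Fin S.n) : List α :=
  match h : S.rule i with
  | Sum.inl a => [a]
  | Sum.inr jk =>
    have _h1 := (S.wf i jk h).1
    have _h2 := (S.wf i jk h).2
    S.val jk.1 ++ S.val jk.2
termination_by i.val

/-- the last variable `X_n` -/
def lastIdx (S : SLP α) : Fin S.n := ⟨S.n - 1, Nat.sub_lt S.npos Nat.one_pos⟩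

/-- the string `T` represented by the SLP -/
def text (S : SLP α) : List α := S.val S.lastIdx

/-- `T([i:j])`: the (1-based, inclusive) substring of a string -/
def substr (T : List α) (i j : ℕ) : List α := (T.drop (i - 1)).take (j + 1 - i)

/-- `pre(T,q)` -/
def spre (T : List α) (q : ℕ) : List α := T.take q

/-- `suf(T,q)` -/
def ssuf (T : List α) (q : ℕ) : List α := T.drop (T.length - q)

/-- `pre([b:e],q)` for intervals of positions -/
def ipre (b e q : ℕ) : Finset ℕ := Finset.Icc b (min (b + q - 1) e)

/-- `suf([b:e],q)` for intervals of positions -/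
def isuf (b e q : ℕ) : Finset ℕ := Finset.Icc (max b (e + 1 - q)) e

/-- `Occ(T,P)`: the set of (1-based) occurrences of `P` in `T` -/
def Occ [DecidableEq α] (T P : List α) : Finset ℕ :=
  (Finset.Icc 1 T.length).filter fun k => substr T k (k + P.length - 1) = P

/-- the multiset of labels of the nodes of the derivation tree rooted at
a node labeled `X_i` -/
def occsFrom (S : SLP α) (i : Fin S.n) : Multiset (Fin S.n) :=
  match h : S.rule i with
  | Sum.inl _ => {i}
  | Sum.inr jk =>
    have _h1 := (S.wf i jk h).1
    have _h2 := (S.wf i jk h).2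
    i ::ₘ (S.occsFrom jk.1 + S.occsFrom jk.2)
termination_by i.val

/-- `vOcc(X_i)`: the number of nodes of the derivation tree labeled `X_i` -/
def vOcc (S : SLP α) (i : Fin S.n) : ℕ := (S.occsFrom S.lastIdx).count i

/-- the string `t_i = suf(val(X_{ℓ(i)}),q-1) pre(val(X_{r(i)}),q-1)`
(and `[]` for a terminal rule) -/
def tstr (S : SLP α) (q : ℕ) (i : Fin S.n) : List α :=
  match S.rule i with
  | Sum.inl _ => []
  | Sum.inr jk => ssuf (S.val jk.1) (q - 1) ++ spre (S.val jk.2) (q - 1)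

/-- `label(X_i) = t_i([q:|t_i|])` -/
def labelStr (S : SLP α) (q : ℕ) (i : Fin S.n) : List α := (S.tstr q i).drop (q - 1)

/-- Nodes of the derivation tree are represented by the path from the root
(`false` = go to left child, `true` = go to right child).  `descend i p`
returns the label of the node reached from a node labeled `X_i` by path `p`. -/
def descend (S : SLP α) : Fin S.n → List Bool → Option (Fin S.n)
  | i, [] => some i
  | i, b :: p =>
    match S.rule i with
    | Sum.inl _ => none
    | Sum.inr jk => S.descend (if b then jk.2 else jk.1) p

/-- the label of the node of the derivation tree reached by path `p` from the root -/
def nodeVar (S : SLP α) (p : List Bool) : Option (Fin S.n) := S.descend S.lastIdx p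

/-- `p` is a valid node of the derivation tree -/
def IsNode (S : SLP α) (p : List Bool) : Prop := (S.nodeVar p).isSome

/-- the 0-based offset in `val(X_i)` of the part derived below path `p` -/
def offsetFrom (S : SLP α) : Fin S.n → List Bool → ℕ
  | _, [] => 0
  | i, b :: p =>
    match S.rule i with
    | Sum.inl _ => 0
    | Sum.inr jk =>
      if b then (S.val jk.1).length + S.offsetFrom jk.2 p
      else S.offsetFrom jk.1 p

/-- the 0-based offset in `T` of the interval derived by node `p` -/
def offset (S : SLP α) (p : List Bool) : ℕ := S.offsetFrom S.lastIdx p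

/-- `itv(v)`: the (1-based) interval of positions of `T` derived by node `p` -/
def itv (S : SLP α) (p : List Bool) : Finset ℕ :=
  match S.nodeVar p with
  | some i => Finset.Icc (S.offset p + 1) (S.offset p + (S.val i).length)
  | none => ∅

/-- `p = ξ(b,e)`: `p` is the deepest node whose interval contains `[b:e]`,
i.e. `itv(p) ⊇ [b:e]` and no proper descendant of `p` satisfies this. -/
def Stabs (S : SLP α) (p : List Bool) (b e : ℕ) : Prop :=
  S.IsNode p ∧ Finset.Icc b e ⊆ S.itv p ∧
  ∀ p' : List Bool, p <+: p' → p ≠ p' → S.IsNode p' → ¬ Finset.Icc b e ⊆ S.itv p'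

/-- `X_j` is a right `q`-gram neighbor of `X_i` -/
def RightNbr (S : SLP α) (q : ℕ) (i j : Fin S.n) : Prop :=
  i ≠ j ∧ ∃ u p p', 1 ≤ u ∧ u + q ≤ S.text.length ∧
    S.Stabs p u (u + q - 1) ∧ S.nodeVar p = some i ∧
    S.Stabs p' (u + 1) (u + q) ∧ S.nodeVar p' = some j

/-- `lm_q(X_i)`: the last variable of length `≥ q` on the sequence `i, ℓ(i), ℓ(ℓ(i)), …`
(meaningful when `|val(X_i)| ≥ q`) -/
def lm (S : SLP α) (q : ℕ) (i : Fin S.n) : Fin S.n :=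
  match h : S.rule i with
  | Sum.inl _ => i
  | Sum.inr jk =>
    have := (S.wf i jk h).1
    if (S.val jk.1).length < q then i else S.lm q jk.1
termination_by i.val

/-- `rm_q(X_i)`: the last variable of length `≥ q` on the sequence `i, r(i), r(r(i)), …` -/
def rm (S : SLP α) (q : ℕ) (i : Fin S.n) : Fin S.n :=
  match h : S.rule i with
  | Sum.inl _ => i
  | Sum.inr jk =>
    have := (S.wf i jk h).2
    if (S.val jk.2).length < q then i else S.rm q jk.2
termination_by i.val

/-- `lm_q` returning `null` (`none`) when `|val(X_i)| < q` -/
def lmOpt (S : SLP α) (q : ℕ) (i : Fin S.n) : Option (Fin S.n) :=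
  if (S.val i).length < q then none else some (S.lm q i)

/-- `rm_q` returning `null` (`none`) when `|val(X_i)| < q` -/
def rmOpt (S : SLP α) (q : ℕ) (i : Fin S.n) : Option (Fin S.n) :=
  if (S.val i).length < q then none else some (S.rm q i)

/-- `LSpine S i k`: `k` occurs in the sequence `i, ℓ(i), ℓ(ℓ(i)), …`
(the leftmost path of the derivation subtree rooted at a node labeled `X_i`) -/
inductive LSpine (S : SLP α) : Fin S.n → Fin S.n → Prop
  | refl (i : Fin S.n) : LSpine S i i
  | step {i k : Fin S.n} {jk : Fin S.n × Fin S.n} :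
      S.rule i = Sum.inr jk → LSpine S jk.1 k → LSpine S i k

end SLP

namespace SLP

variable {α : Type} {S : SLP α}

lemma val_of_rule_inl {i : Fin S.n} {a : α} (h : S.rule i = Sum.inl a) : S.val i = [a] := by
  rw [val]; split <;> simp_all

lemma val_of_rule_inr {i : Fin S.n} {jk : Fin S.n × Fin S.n} (h : S.rule i = Sum.inr jk) :
    S.val i = S.val jk.1 ++ S.val jk.2 := by
  rw [val]; split <;> simp_all

lemma length_val_pos (i : Fin S.n) : 0 < (S.val i).length := by
  cases h : S.rule i with
  | inl a => simp [val_of_rule_inl h]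
  | inr jk =>
    have := (S.wf i jk h).1
    have := length_val_pos jk.1
    simp only [val_of_rule_inr h, List.length_append]
    omega
termination_by i.val

lemma lm_of_rule_inr {q : ℕ} {i : Fin S.n} {jk : Fin S.n × Fin S.n} (h : S.rule i = Sum.inr jk) :
    S.lm q i = if (S.val jk.1).length < q then i else S.lm q jk.1 := by
  rw [lm]; split <;> simp_all

lemma exists_rule_lm_eq_inr {q : ℕ} (hq : 2 ≤ q) {i : Fin S.n} (h : q ≤ (S.val i).length) :
    ∃ jk : Fin S.n × Fin S.n, S.rule (S.lm q i) = Sum.inr jk ∧ (S.val jk.1).length < q := by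
  cases hr : S.rule i with
  | inl a =>
    simp only [val_of_rule_inl hr, List.length_singleton] at h
    omega
  | inr jk =>
    have := (S.wf i jk hr).1
    rw [lm_of_rule_inr hr]
    split_ifs with hlt
    · exact ⟨jk, hr, hlt⟩
    · exact exists_rule_lm_eq_inr hq (le_of_not_gt hlt)
termination_by i.val

lemma descend_cons_of_rule_inl {i : Fin S.n} {a : α} (h : S.rule i = Sum.inl a) (b : Bool)
    (p : List Bool) : S.descend i (b :: p) = none := by
  simp [descend, h]

lemma descend_cons_of_rule_inr {i : Fin S.n} {jk : Fin S.n × Fin S.n} (h : S.rule i = Sum.inr jk)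
    (b : Bool) (p : List Bool) :
    S.descend i (b :: p) = S.descend (if b then jk.2 else jk.1) p := by
  simp [descend, h]

lemma offsetFrom_cons_of_rule_inr {i : Fin S.n} {jk : Fin S.n × Fin S.n}
    (h : S.rule i = Sum.inr jk) (b : Bool) (p : List Bool) :
    S.offsetFrom i (b :: p) =
      (if b then (S.val jk.1).length else 0) + S.offsetFrom (if b then jk.2 else jk.1) p := by
  cases b <;> simp [offsetFrom, h]

lemma descend_append (i : Fin S.n) (p p' : List Bool) :
    S.descend i (p ++ p') = (S.descend i p).bind (S.descend · p') := by
  induction p generalizing i with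
  | nil => rfl
  | cons b p ih =>
    cases h : S.rule i with
    | inl a => simp [descend_cons_of_rule_inl h]
    | inr jk => simp [descend_cons_of_rule_inr h, ih]

lemma offsetFrom_append {i k : Fin S.n} (p p' : List Bool) (h : S.descend i p = some k) :
    S.offsetFrom i (p ++ p') = S.offsetFrom i p + S.offsetFrom k p' := by
  induction p generalizing i with
  | nil =>
    cases Option.some_injective _ h
    simp [offsetFrom]
  | cons b p ih =>
    cases hr : S.rule i with
    | inl a => simp [descend_cons_of_rule_inl hr] at h
    | inr jk =>
      rw [descend_cons_of_rule_inr hr] at h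
      rw [List.cons_append, offsetFrom_cons_of_rule_inr hr, offsetFrom_cons_of_rule_inr hr, ih h]
      omega

lemma offsetFrom_add_length_le {i k : Fin S.n} (p : List Bool) (h : S.descend i p = some k) :
    S.offsetFrom i p + (S.val k).length ≤ (S.val i).length := by
  induction p generalizing i with
  | nil =>
    cases Option.some_injective _ h
    simp [offsetFrom]
  | cons b p ih =>
    cases hr : S.rule i with
    | inl a => simp [descend_cons_of_rule_inl hr] at h
    | inr jk =>
      rw [descend_cons_of_rule_inr hr] at h
      have := ih h
      rw [offsetFrom_cons_of_rule_inr hr, val_of_rule_inr hr, List.length_append]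
      cases b <;> simp only [if_true, if_false, Bool.false_eq_true] at this ⊢ <;> omega

lemma prefix_or_prefix_of_mem {i k₁ k₂ : Fin S.n} {p₁ p₂ : List Bool} {x : ℕ}
    (h₁ : S.descend i p₁ = some k₁) (h₂ : S.descend i p₂ = some k₂)
    (hx₁ : x ∈ Finset.Icc (S.offsetFrom i p₁ + 1) (S.offsetFrom i p₁ + (S.val k₁).length))
    (hx₂ : x ∈ Finset.Icc (S.offsetFrom i p₂ + 1) (S.offsetFrom i p₂ + (S.val k₂).length)) :
    p₁ <+: p₂ ∨ p₂ <+: p₁ := by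
  induction p₁ generalizing i p₂ x with
  | nil => exact Or.inl List.nil_prefix
  | cons b₁ p₁ ih =>
    cases p₂ with
    | nil => exact Or.inr List.nil_prefix
    | cons b₂ p₂ =>
      cases hr : S.rule i with
      | inl a => simp [descend_cons_of_rule_inl hr] at h₁
      | inr jk =>
        rw [descend_cons_of_rule_inr hr] at h₁ h₂
        rw [Finset.mem_Icc, offsetFrom_cons_of_rule_inr hr] at hx₁ hx₂
        have hle₁ := offsetFrom_add_length_le p₁ h₁
        have hle₂ := offsetFrom_add_length_le p₂ h₂
        by_cases hb : b₁ = b₂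
        · subst hb
          have := ih h₁ h₂ (x := x - if b₁ then (S.val jk.1).length else 0)
            (Finset.mem_Icc.2 (by omega)) (Finset.mem_Icc.2 (by omega))
          simpa only [List.cons_prefix_cons, true_and] using this
        · exfalso
          cases b₁ <;> cases b₂ <;> simp_all <;> omega

lemma itv_of_nodeVar {p : List Bool} {k : Fin S.n} (h : S.nodeVar p = some k) :
    S.itv p = Finset.Icc (S.offset p + 1) (S.offset p + (S.val k).length) := by
  rw [itv, h]

lemma isNode_of_nodeVar {p : List Bool} {k : Fin S.n} (h : S.nodeVar p = some k) : S.IsNode p := by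
  rw [IsNode, h]; rfl

lemma nodeVar_append_singleton {p : List Bool} {k : Fin S.n} {jk : Fin S.n × Fin S.n}
    (hk : S.nodeVar p = some k) (hr : S.rule k = Sum.inr jk) (c : Bool) :
    S.nodeVar (p ++ [c]) = some (if c then jk.2 else jk.1) := by
  rw [nodeVar, descend_append, ← nodeVar, hk]
  simp [descend, hr]

lemma offset_append_singleton {p : List Bool} {k : Fin S.n} {jk : Fin S.n × Fin S.n}
    (hk : S.nodeVar p = some k) (hr : S.rule k = Sum.inr jk) (c : Bool) :
    S.offset (p ++ [c]) = S.offset p + if c then (S.val jk.1).length else 0 := by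
  rw [offset, offsetFrom_append _ _ hk, offsetFrom_cons_of_rule_inr hr]
  cases c <;> simp [offsetFrom, offset]

lemma itv_subset_of_prefix {p p' : List Bool} (h : p <+: p') (h' : S.IsNode p') :
    S.itv p' ⊆ S.itv p := by
  obtain ⟨t, rfl⟩ := h
  obtain ⟨k', hk'⟩ := Option.isSome_iff_exists.1 h'
  have hdes := hk'
  rw [nodeVar, descend_append] at hdes
  obtain ⟨k, hk, hkt⟩ := Option.bind_eq_some_iff.1 hdes
  have hle := offsetFrom_add_length_le t hkt
  rw [itv_of_nodeVar hk', itv_of_nodeVar hk, offset, offsetFrom_append _ _ hk, ← offset]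
  intro x hx
  simp only [Finset.mem_Icc] at hx ⊢
  omega

lemma Stabs.unique {p₁ p₂ : List Bool} {b e : ℕ} (hbe : b ≤ e)
    (h₁ : S.Stabs p₁ b e) (h₂ : S.Stabs p₂ b e) : p₁ = p₂ := by
  obtain ⟨hn₁, hs₁, hd₁⟩ := h₁
  obtain ⟨hn₂, hs₂, hd₂⟩ := h₂
  obtain ⟨k₁, hk₁⟩ := Option.isSome_iff_exists.1 hn₁
  obtain ⟨k₂, hk₂⟩ := Option.isSome_iff_exists.1 hn₂
  have hb : b ∈ Finset.Icc b e := Finset.mem_Icc.2 ⟨le_rfl, hbe⟩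
  have hb₁ := hs₁ hb
  have hb₂ := hs₂ hb
  rw [itv_of_nodeVar hk₁] at hb₁
  rw [itv_of_nodeVar hk₂] at hb₂
  rcases prefix_or_prefix_of_mem hk₁ hk₂ hb₁ hb₂ with h | h
  · by_contra hne
    exact hd₁ p₂ h hne hn₂ hs₂
  · by_contra hne
    exact hd₂ p₁ h (Ne.symm hne) hn₁ hs₁

lemma stabs_iff_straddle {p : List Bool} {k : Fin S.n} {jk : Fin S.n × Fin S.n} {b e : ℕ}
    (hk : S.nodeVar p = some k) (hr : S.rule k = Sum.inr jk) (hbe : b ≤ e)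
    (hsub : Finset.Icc b e ⊆ S.itv p) :
    S.Stabs p b e ↔
      b ≤ S.offset p + (S.val jk.1).length ∧ S.offset p + (S.val jk.1).length < e := by
  have hitv (c : Bool) : S.itv (p ++ [c]) = Finset.Icc
      (S.offset p + (if c then (S.val jk.1).length else 0) + 1)
      (S.offset p + (if c then (S.val jk.1).length else 0) +
        (S.val (if c then jk.2 else jk.1)).length) := by
    rw [itv_of_nodeVar (nodeVar_append_singleton hk hr c), offset_append_singleton hk hr c]
  constructor
  · rintro ⟨-, -, hdeep⟩
    have hchild (c : Bool) : ¬ Finset.Icc b e ⊆ S.itv (p ++ [c]) :=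
      hdeep _ ⟨[c], rfl⟩ (by simp) (isNode_of_nodeVar (nodeVar_append_singleton hk hr c))
    have hleft := hchild false
    have hright := hchild true
    have hbin := hsub (Finset.mem_Icc.2 ⟨le_rfl, hbe⟩)
    have hein := hsub (Finset.mem_Icc.2 ⟨hbe, le_rfl⟩)
    rw [itv_of_nodeVar hk, Finset.mem_Icc, val_of_rule_inr hr, List.length_append] at hbin hein
    simp only [hitv, Finset.Icc_subset_Icc_iff hbe] at hleft hright
    simp only [if_true, if_false, Bool.false_eq_true] at hleft hright
    omega
  · rintro ⟨hb, he⟩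
    refine ⟨isNode_of_nodeVar hk, hsub, ?_⟩
    rintro p' ⟨t, rfl⟩ hne hnode hcon
    obtain ⟨c, t, rfl⟩ := List.exists_cons_of_ne_nil (l := t) (by rintro rfl; simp at hne)
    have hsub' := hcon.trans (itv_subset_of_prefix (p := p ++ [c]) ⟨t, by simp⟩ hnode)
    rw [hitv, Finset.Icc_subset_Icc_iff hbe] at hsub'
    cases c <;> simp only [if_true, if_false, Bool.false_eq_true] at hsub' <;> omega

lemma exists_stabs_lm {q : ℕ} (hq : 2 ≤ q) (k : Fin S.n) {p : List Bool}
    (hk : S.nodeVar p = some k) (hlen : q ≤ (S.val k).length) :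
    ∃ p', S.Stabs p' (S.offset p + 1) (S.offset p + q) ∧ S.nodeVar p' = some (S.lm q k) := by
  cases hr : S.rule k with
  | inl a =>
    simp only [val_of_rule_inl hr, List.length_singleton] at hlen
    omega
  | inr jk =>
    have := (S.wf k jk hr).1
    rw [lm_of_rule_inr hr]
    split_ifs with hlt
    · have hpos := length_val_pos jk.1
      refine ⟨p, (stabs_iff_straddle hk hr (by omega) ?_).2 ⟨by omega, by omega⟩, hk⟩
      rw [itv_of_nodeVar hk]
      exact Finset.Icc_subset_Icc le_rfl (by omega)
    · have hleft := nodeVar_append_singleton hk hr false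
      have hoff := offset_append_singleton hk hr false
      simp only [if_false, Bool.false_eq_true, add_zero] at hleft hoff
      rw [← hoff]
      exact exists_stabs_lm hq jk.1 hleft (le_of_not_gt hlt)
termination_by k.val

/-- `ξ(u, u+q-1)` straddles the boundary between its children; were that boundary after `u`, it
would also be `ξ(u+1, u+q)` and `X_j` would be `X_i`. So `u+1` starts the right child, and
`ξ(u+1, u+q)` lies on the leftmost path below it. -/
lemma RightNbr.eq_lm {q : ℕ} (hq : 2 ≤ q) {i j : Fin S.n} {jk : Fin S.n × Fin S.n}
    (hr : S.rule i = Sum.inr jk) (hlen : q ≤ (S.val jk.2).length)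
    (hnbr : S.RightNbr q i j) : j = S.lm q jk.2 := by
  obtain ⟨hij, u, p, p', -, -, hstab, hp, hstab', hp'⟩ := hnbr
  have hsub := hstab.2.1
  have hstraddle := (stabs_iff_straddle hp hr (by omega) hsub).1 hstab
  have hu := hsub (Finset.mem_Icc.2 ⟨le_rfl, by omega⟩)
  rw [itv_of_nodeVar hp, Finset.mem_Icc, val_of_rule_inr hr, List.length_append] at hu
  have hboundary : u = S.offset p + (S.val jk.1).length := by
    by_contra hne
    have hsub' : Finset.Icc (u + 1) (u + q) ⊆ S.itv p := by
      rw [itv_of_nodeVar hp, val_of_rule_inr hr, List.length_append]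
      exact Finset.Icc_subset_Icc (by omega) (by omega)
    have hpp' := (hstab'.unique (by omega) ((stabs_iff_straddle hp hr (by omega) hsub').2
      ⟨by omega, by omega⟩)).symm
    subst hpp'
    exact hij (Option.some_injective _ (hp.symm.trans hp'))
  have hright := nodeVar_append_singleton hp hr true
  have hoff := offset_append_singleton hp hr true
  simp only [if_true] at hright hoff
  obtain ⟨p'', hstab'', hp''⟩ := exists_stabs_lm hq jk.2 hright hlen
  rw [hoff, ← hboundary] at hstab''
  rw [hstab'.unique (by omega) hstab'', hp''] at hp'
  exact Option.some_injective _ hp'.symm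

end SLP

/-- if `X_j` is a right `q`-gram neighbor of `X_i` and
`|val(X_{r(i)})| ≥ q`, then `j = lm_q(X_{r(i)})`; in particular the right
`q`-gram neighbor of `X_i` is uniquely determined, and `|val(X_{ℓ(j)})| < q`. -/
theorem stmt3 {α : Type} (q : ℕ) (hq : 2 ≤ q) (S : SLP α)
    (i j : Fin S.n) (jki : Fin S.n × Fin S.n)
    (hri : S.rule i = Sum.inr jki)
    (hnbr : S.RightNbr q i j) (hlen : q ≤ (S.val jki.2).length) :
    j = S.lm q jki.2 ∧ (∀ j', S.RightNbr q i j' → j' = j) ∧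
      ∃ jkj : Fin S.n × Fin S.n, S.rule j = Sum.inr jkj ∧ (S.val jkj.1).length < q := by
  have hj := hnbr.eq_lm hq hri hlen
  refine ⟨hj, fun j' hj' => (hj'.eq_lm hq hri hlen).trans hj.symm, ?_⟩
  rw [hj]
  exact SLP.exists_rule_lm_eq_inr hq hlen
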